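/- arXiv:1509.07927 — 2 statements merged into one kernel-verified Lean document; each statement's English description precedes it below -/
import Mathlib

section
/- Let θ ∈ ℝ^N, let θ̂ be a random vector on a probability space (Ω, μ), and let a > 0, m ≥ 1, N ≥ 1, C ⊆ ℝ^N and h > 0 be such that for every η > 0, μ( ∃ x ∈ C with |⟨θ̂, x⟩ − ⟨θ, x⟩| > η ) ≤ 2 N exp( − a m η² / h² ). Let E ⊆ C be a finite set, x* ∈ E, and Δ > 0 satisfy ⟨θ, x*⟩ − ⟨θ, y⟩ ≥ Δ for all y ∈ E with y ≠ x*. Then μ( ∃ y ∈ E, y ≠ x*, with ⟨θ̂, y⟩ ≥ ⟨θ̂, x*⟩ ) ≤ 2 N exp( − a m Δ² / (4 h²) ). -/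
open MeasureTheory Real Set Filter Topology

/-!
If the greedy arm is wrong, some `y ≠ x*` has `⟨θ̂, y⟩ ≥ ⟨θ̂, x*⟩` although `⟨θ, x*⟩ - ⟨θ, y⟩ ≥ Δ`,
so the estimation error exceeds `η` at `x*` or at `y` for every `η < Δ / 2`. The tail bound at
each such `η` and continuity of the right-hand side in `η` give the bound at `η = Δ / 2`.
-/

theorem le_of_forall_Ioo_le_of_continuousWithinAt {β : Type*} [TopologicalSpace β] [Preorder β]
    [ClosedIciTopology β] {g : ℝ → β} {b c : ℝ} {x : β} (hbc : b < c)
    (hg : ContinuousWithinAt g (Iio c) c) (hle : ∀ η ∈ Ioo b c, x ≤ g η) : x ≤ g c :=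
  ge_of_tendsto hg (eventually_of_mem (Ioo_mem_nhdsLT hbc) hle)

theorem lt_of_abs_sub_le_of_gap {r rhat s shat η Δ : ℝ}
    (hr : |rhat - r| ≤ η) (hs : |shat - s| ≤ η) (hgap : Δ ≤ r - s) (hη : η < Δ / 2) :
    shat < rhat := by
  rw [abs_le] at hr hs
  linarith [hr.1, hs.2]

theorem setOf_misranked_subset {Ω α : Type*} (r : α → ℝ) (rhat : Ω → α → ℝ) {E C : Set α}
    (hEC : E ⊆ C) {xstar : α} (hx : xstar ∈ E) {Δ η : ℝ}
    (hgap : ∀ y ∈ E, y ≠ xstar → Δ ≤ r xstar - r y) (hη : η < Δ / 2) :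
    {ω | ∃ y ∈ E, y ≠ xstar ∧ rhat ω xstar ≤ rhat ω y} ⊆
      {ω | ∃ x ∈ C, η < |rhat ω x - r x|} := by
  rintro ω ⟨y, hyE, hyx, hmis⟩
  show ∃ x ∈ C, η < |rhat ω x - r x|
  by_contra! hsmall
  exact hmis.not_gt <| lt_of_abs_sub_le_of_gap (hsmall xstar (hEC hx)) (hsmall y (hEC hyE))
    (hgap y hyE hyx) hη

theorem greedy_error_probability_bound_general
    {Ω : Type*} [MeasurableSpace Ω] (μ : Measure Ω)
    (N : ℕ) (θ : Fin N → ℝ) (θhat : Ω → Fin N → ℝ)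
    (a : ℝ) (m : ℕ)
    (C : Set (Fin N → ℝ)) (h : ℝ)
    (htail : ∀ η : ℝ, 0 < η →
      μ {ω | ∃ x ∈ C, η < |(∑ i, θhat ω i * x i) - ∑ i, θ i * x i|} ≤
        ENNReal.ofReal (2 * N * Real.exp (-(a * m * η ^ 2) / h ^ 2)))
    (E : Finset (Fin N → ℝ)) (hE : ∀ y ∈ E, y ∈ C)
    (xstar : Fin N → ℝ) (hx : xstar ∈ E) (Δ : ℝ) (hΔ : 0 < Δ)
    (hgap : ∀ y ∈ E, y ≠ xstar → Δ ≤ (∑ i, θ i * xstar i) - ∑ i, θ i * y i) :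
    μ {ω | ∃ y ∈ E, y ≠ xstar ∧ (∑ i, θhat ω i * xstar i) ≤ ∑ i, θhat ω i * y i} ≤
      ENNReal.ofReal (2 * N * Real.exp (-(a * m * Δ ^ 2) / (4 * h ^ 2))) := by
  rw [show -(a * m * Δ ^ 2) / (4 * h ^ 2) = -(a * m * (Δ / 2) ^ 2) / h ^ 2 by ring]
  refine le_of_forall_Ioo_le_of_continuousWithinAt
    (g := fun η ↦ ENNReal.ofReal (2 * N * Real.exp (-(a * m * η ^ 2) / h ^ 2))) (half_pos hΔ)
    (ENNReal.continuous_ofReal.comp (by fun_prop)).continuousWithinAt fun η hη ↦ ?_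
  have hsub := setOf_misranked_subset (fun x ↦ ∑ i, θ i * x i)
    (fun ω x ↦ ∑ i, θhat ω i * x i) (E := (E : Set (Fin N → ℝ))) hE hx hgap hη.2
  exact (measure_mono hsub).trans (htail η hη.1)

/-- Lemma 2(c): the probability that the greedy arm computed
from the estimate `θ̂` differs from the true optimal arm `x*` (i.e. some other
extremal point `y` has estimated reward at least that of `x*`) is at most
`2 N exp(−a m Δ² / (4 h²))`. -/
theorem greedy_error_probability_bound
    {Ω : Type*} [MeasurableSpace Ω] (μ : Measure Ω) [IsProbabilityMeasure μ]
    (N : ℕ) (hN : 1 ≤ N) (θ : Fin N → ℝ) (θhat : Ω → Fin N → ℝ)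
    (a : ℝ) (ha : 0 < a) (m : ℕ) (hm : 1 ≤ m)
    (C : Set (Fin N → ℝ)) (h : ℝ) (hh : 0 < h)
    (htail : ∀ η : ℝ, 0 < η →
      μ {ω | ∃ x ∈ C, η < |(∑ i, θhat ω i * x i) - ∑ i, θ i * x i|} ≤
        ENNReal.ofReal (2 * N * Real.exp (-(a * m * η ^ 2) / h ^ 2)))
    (E : Finset (Fin N → ℝ)) (hE : ∀ y ∈ E, y ∈ C)
    (xstar : Fin N → ℝ) (hx : xstar ∈ E) (Δ : ℝ) (hΔ : 0 < Δ)
    (hgap : ∀ y ∈ E, y ≠ xstar → Δ ≤ (∑ i, θ i * xstar i) - ∑ i, θ i * y i) :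
    μ {ω | ∃ y ∈ E, y ≠ xstar ∧ (∑ i, θhat ω i * xstar i) ≤ ∑ i, θhat ω i * y i} ≤
      ENNReal.ofReal (2 * N * Real.exp (-(a * m * Δ ^ 2) / (4 * h ^ 2))) :=
  greedy_error_probability_bound_general μ N θ θhat a m C h htail E hE xstar hx Δ hΔ hgap
end

section
/- Let C ⊆ ℝ^N be a nonempty compact convex set whose set E of extreme points is finite. Let θ, θ̂ ∈ ℝ^N, x* ∈ E, and Δ > 0 be such that ⟨θ, x*⟩ − ⟨θ, y⟩ ≥ Δ for every y ∈ E with y ≠ x*. If |⟨θ̂, x⟩ − ⟨θ, x⟩| < Δ/2 for every x ∈ E, then ⟨θ̂, y⟩ ≤ ⟨θ̂, x*⟩ for every y ∈ C; that is, x* maximizes the perturbed linear objective x ↦ ⟨θ̂, x⟩ over all of C. -/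
/-!
The gap `Δ` at `x*` exceeds the total error `Δ/2 + Δ/2` of the two estimates being compared, so
`x*` still beats every other extreme point under `θ̂`. A continuous convex function, here the
linear one `x ↦ ⟨θ̂, x⟩`, is bounded on a compact convex set by its bound on the extreme points,
since by Krein–Milman the set is the closed convex hull of those points.
-/

open Matrix

section MaximumPrinciple

variable {E : Type*} [AddCommGroup E] [Module ℝ E] [TopologicalSpace E] [T2Space E]
  [IsTopologicalAddGroup E] [ContinuousSMul ℝ E] [LocallyConvexSpace ℝ E]

theorem ConvexOn.le_of_forall_mem_extremePoints_le {s : Set E} {f : E → ℝ} {c : ℝ}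
    (hs : IsCompact s) (hf : ConvexOn ℝ s f) (hfc : ContinuousOn f s)
    (h : ∀ x ∈ s.extremePoints ℝ, f x ≤ c) : ∀ x ∈ s, f x ≤ c := by
  have hsub : closure (convexHull ℝ (s.extremePoints ℝ)) ⊆ {x ∈ s | f x ≤ c} :=
    closure_minimal
      (convexHull_min (fun x hx => ⟨extremePoints_subset hx, h x hx⟩) (hf.convex_le c))
      (hfc.preimage_isClosed_of_isClosed hs.isClosed isClosed_Iic)
  rw [closure_convexHull_extremePoints hs hf.1] at hsub
  exact fun x hx => (hsub hx).2

end MaximumPrinciple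

theorem lt_of_le_sub_of_abs_sub_lt_half {α : Type*} [Field α] [LinearOrder α]
    [IsStrictOrderedRing α] {a b a' b' Δ : α} (hgap : Δ ≤ a - b)
    (ha : |a' - a| < Δ / 2) (hb : |b' - b| < Δ / 2) : b' < a' := by
  linarith [(abs_lt.1 ha).1, (abs_lt.1 hb).2]

theorem perturbed_optimum_of_small_error_general
    {N : ℕ} (C : Set (Fin N → ℝ)) (hcomp : IsCompact C) (hconv : Convex ℝ C)
    (θ θhat : Fin N → ℝ) (xstar : Fin N → ℝ)
    (hx : xstar ∈ C.extremePoints ℝ) (Δ : ℝ)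
    (hgap : ∀ y ∈ C.extremePoints ℝ, y ≠ xstar →
      Δ ≤ (∑ i, θ i * xstar i) - ∑ i, θ i * y i)
    (herr : ∀ x ∈ C.extremePoints ℝ,
      |(∑ i, θhat i * x i) - ∑ i, θ i * x i| < Δ / 2) :
    ∀ y ∈ C, (∑ i, θhat i * y i) ≤ ∑ i, θhat i * xstar i := by
  refine ConvexOn.le_of_forall_mem_extremePoints_le (f := (θhat ⬝ᵥ ·)) hcomp
    ((dotProductBilin ℝ ℝ θhat).convexOn hconv) (Continuous.continuousOn (by fun_prop))
    fun z hz => ?_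
  rcases eq_or_ne z xstar with rfl | hzx
  · exact le_rfl
  · exact (lt_of_le_sub_of_abs_sub_lt_half (hgap z hz hzx) (herr xstar hx) (herr z hz)).le

/-- robustness of the optimal arm over a compact convex set
with finitely many extreme points: if the gap at the extreme points is `Δ` and
all estimation errors at the extreme points are below `Δ/2`, then `x*`
maximizes the perturbed objective `x ↦ ⟨θ̂, x⟩` over all of `C`. -/
theorem perturbed_optimum_of_small_error
    {N : ℕ} (C : Set (Fin N → ℝ)) (hcomp : IsCompact C) (hconv : Convex ℝ C)
    (hne : C.Nonempty) (hfin : (C.extremePoints ℝ).Finite)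
    (θ θhat : Fin N → ℝ) (xstar : Fin N → ℝ)
    (hx : xstar ∈ C.extremePoints ℝ) (Δ : ℝ) (hΔ : 0 < Δ)
    (hgap : ∀ y ∈ C.extremePoints ℝ, y ≠ xstar →
      Δ ≤ (∑ i, θ i * xstar i) - ∑ i, θ i * y i)
    (herr : ∀ x ∈ C.extremePoints ℝ,
      |(∑ i, θhat i * x i) - ∑ i, θ i * x i| < Δ / 2) :
    ∀ y ∈ C, (∑ i, θhat i * y i) ≤ ∑ i, θhat i * xstar i :=
  perturbed_optimum_of_small_error_general C hcomp hconv θ θhat xstar hx Δ hgap herr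
end
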